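/- Let X and Y be random variables on a probability space with joint law P_{XY} and marginal laws P_X, P_Y. For every measurable critic function f : 𝒳 × 𝒴 → ℝ such that f is P_{XY}-integrable and e^{f} is (P_X ⊗ P_Y)-integrable, the mutual information satisfies I(X;Y) ≥ E_{P_{XY}}[f(X,Y)] − E_{P_X ⊗ P_Y}[e^{f(x,y)}]. -/

import Mathlib

open MeasureTheory Real

open Classical in
/-- Kullback–Leibler divergence between two measures, valued in the extended reals:
it is the integral of the log-likelihood ratio when `μ ≪ ν` and the log-likelihood
ratio is `μ`-integrable, and `⊤` otherwise. -/
noncomputable def klDiv {α : Type*} [MeasurableSpace α] (μ ν : Measure α) : EReal :=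
  if μ ≪ ν ∧ Integrable (llr μ ν) μ then ((∫ x, llr μ ν x ∂μ : ℝ) : EReal) else ⊤

/-- Mutual information between random variables `X` and `Y` on a probability space
`(Ω, P)`: the KL divergence between the joint law of `(X, Y)` and the product of the
marginal laws of `X` and `Y`. -/
noncomputable def mutualInfo {Ω 𝒳 𝒴 : Type*} [MeasurableSpace Ω] [MeasurableSpace 𝒳]
    [MeasurableSpace 𝒴] (P : Measure Ω) (X : Ω → 𝒳) (Y : Ω → 𝒴) : EReal :=
  klDiv (P.map (fun ω => (X ω, Y ω))) ((P.map X).prod (P.map Y))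

/-!
By the Donsker–Varadhan formula, `KL(μ ‖ ν) ≥ E_μ[f] - log E_ν[e^f]`: the gap is the divergence
of `μ` from the tilted measure `ν.tilted f`, nonnegative by Gibbs' inequality. The TUBA bound
follows from `log t ≤ t - 1 < t`.
-/

section DonskerVaradhan

variable {α : Type*} [MeasurableSpace α] {μ ν : Measure α} {f : α → ℝ}

theorem MeasureTheory.Measure.AbsolutelyContinuous.neZero [NeZero μ] (hμν : μ ≪ ν) : NeZero ν :=
  ⟨fun hν ↦ NeZero.ne μ (Measure.absolutelyContinuous_zero_iff.mp (hν ▸ hμν))⟩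

theorem integral_sub_log_integral_exp_le_integral_llr [IsProbabilityMeasure μ]
    [SigmaFinite ν] (hμν : μ ≪ ν) (hfμ : Integrable f μ)
    (hfν : Integrable (fun x ↦ exp (f x)) ν) (h_llr : Integrable (llr μ ν) μ) :
    ∫ x, f x ∂μ - log (∫ x, exp (f x) ∂ν) ≤ ∫ x, llr μ ν x ∂μ := by
  have := hμν.neZero
  have := isProbabilityMeasure_tilted hfν
  have h_gibbs := InformationTheory.integral_llr_add_sub_measure_univ_nonneg
    (hμν.trans (absolutelyContinuous_tilted hfν)) (integrable_llr_tilted_right hμν hfμ h_llr hfν)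
  rw [integral_llr_tilted_right hμν hfμ hfν h_llr] at h_gibbs
  simp only [probReal_univ, add_sub_cancel_right] at h_gibbs
  linarith

theorem integral_sub_integral_exp_le_integral_llr [IsProbabilityMeasure μ]
    [SigmaFinite ν] (hμν : μ ≪ ν) (hfμ : Integrable f μ)
    (hfν : Integrable (fun x ↦ exp (f x)) ν) (h_llr : Integrable (llr μ ν) μ) :
    ∫ x, f x ∂μ - ∫ x, exp (f x) ∂ν ≤ ∫ x, llr μ ν x ∂μ := by
  have := hμν.neZero
  have h_log := log_le_sub_one_of_pos (integral_exp_pos hfν)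
  linarith [integral_sub_log_integral_exp_le_integral_llr hμν hfμ hfν h_llr]

end DonskerVaradhan

theorem mutualInfo_ge_tuba_one_general {Ω 𝒳 𝒴 : Type*} [MeasurableSpace Ω] [MeasurableSpace 𝒳]
    [MeasurableSpace 𝒴] (P : Measure Ω) [IsProbabilityMeasure P]
    (X : Ω → 𝒳) (Y : Ω → 𝒴) (hX : Measurable X) (hY : Measurable Y)
    (f : 𝒳 × 𝒴 → ℝ)
    (h_int₁ : Integrable f (P.map (fun ω => (X ω, Y ω))))
    (h_int₂ : Integrable (fun p => Real.exp (f p)) ((P.map X).prod (P.map Y))) :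
    ((∫ p, f p ∂(P.map (fun ω => (X ω, Y ω)))
        - ∫ p, Real.exp (f p) ∂((P.map X).prod (P.map Y)) : ℝ) : EReal)
      ≤ mutualInfo P X Y := by
  have := Measure.isProbabilityMeasure_map (μ := P) (hX.prodMk hY).aemeasurable
  have := Measure.isProbabilityMeasure_map (μ := P) hX.aemeasurable
  have := Measure.isProbabilityMeasure_map (μ := P) hY.aemeasurable
  unfold mutualInfo klDiv
  split_ifs with h_ac_llr
  · exact_mod_cast integral_sub_integral_exp_le_integral_llr h_ac_llr.1 h_int₁ h_int₂ h_ac_llr.2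
  · exact le_top

/-- **TUBA lower bound with baseline `a(y) ≡ 1`.** For every measurable critic
`f : 𝒳 × 𝒴 → ℝ` such that `f` is integrable w.r.t. the joint law `P_{XY}` and
`e^f` is integrable w.r.t. the product of the marginals `P_X ⊗ P_Y`,
`I(X;Y) ≥ E_{P_{XY}}[f(X,Y)] - E_{P_X ⊗ P_Y}[e^{f(x,y)}]`. -/
theorem mutualInfo_ge_tuba_one {Ω 𝒳 𝒴 : Type*} [MeasurableSpace Ω] [MeasurableSpace 𝒳]
    [MeasurableSpace 𝒴] (P : Measure Ω) [IsProbabilityMeasure P]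
    (X : Ω → 𝒳) (Y : Ω → 𝒴) (hX : Measurable X) (hY : Measurable Y)
    (f : 𝒳 × 𝒴 → ℝ) (hf : Measurable f)
    (h_int₁ : Integrable f (P.map (fun ω => (X ω, Y ω))))
    (h_int₂ : Integrable (fun p => Real.exp (f p)) ((P.map X).prod (P.map Y))) :
    ((∫ p, f p ∂(P.map (fun ω => (X ω, Y ω)))
        - ∫ p, Real.exp (f p) ∂((P.map X).prod (P.map Y)) : ℝ) : EReal)
      ≤ mutualInfo P X Y :=
  mutualInfo_ge_tuba_one_general P X Y hX hY f h_int₁ h_int₂
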